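/- arXiv:1602.06919 — 4 statements merged into one kernel-verified Lean document; each statement's English description precedes it below -/
import Mathlib

section
/- Let (u_p)_{p>1} be a family of sign-changing solutions of the Lane–Emden problem satisfying the energy bound, and let k and (x_{i,p}), i = 1,…,k, be as produced by the concentration theorem (so that (P₁ᵏ), (P₂ᵏ), (P₃ᵏ) hold along a sequence p → ∞). Then for each i ∈ {1,…,k}, dist(x_{i,p}, NL_p)/μ_{i,p} → ∞ as p → ∞, where NL_p is the nodal line of u_p. Consequently, denoting by N_{i,p} the nodal domain of u_p containing x_{i,p} and u_p^i := u_p·χ_{N_{i,p}}, the rescaled function z_{i,p}(x) := (p/u_p(x_{i,p}))(u_p^i(x_{i,p}+μ_{i,p}x) − u_p(x_{i,p})) converges to U in C²_loc(ℝ²). -/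
open Filter Metric MeasureTheory Set
open scoped Topology

noncomputable section

abbrev Plane : Type := EuclideanSpace ℝ (Fin 2)

/-- The Laplacian of a function `u : Plane → ℝ`, defined through iterated Fréchet
derivatives in the coordinate directions. -/
def lap (u : Plane → ℝ) (x : Plane) : ℝ :=
  ∑ i : Fin 2, fderiv ℝ (fun y => fderiv ℝ u y (EuclideanSpace.single i 1)) x
    (EuclideanSpace.single i 1)

/-- `u` is a nontrivial classical solution of the Lane–Emden problem
`-Δu = |u|^(p-1) u` in `Ω`, `u = 0` on `∂Ω`. -/
structure IsLaneEmden (Ω : Set Plane) (p : ℝ) (u : Plane → ℝ) : Prop where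
  smooth : ContDiffOn ℝ 2 u (closure Ω)
  pde : ∀ x ∈ Ω, -lap u x = |u x| ^ (p - 1) * u x
  bdry : ∀ x ∈ frontier Ω, u x = 0
  nontriv : ∃ x ∈ Ω, u x ≠ 0

/-- The standard bubble: the solution `U` of the Liouville equation `-ΔU = e^U`
with `U(0) = 0`, `U ≤ 0`, `∫ e^U = 8π`. -/
def Ufn (x : Plane) : ℝ := Real.log ((1 / (1 + ‖x‖ ^ 2 / 8)) ^ 2)

/-- The scaling parameter `μ(x) = (p |u(x)|^(p-1))^(-1/2)`. -/
def muP (p : ℝ) (u : Plane → ℝ) (x : Plane) : ℝ :=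
  (p * |u x| ^ (p - 1)) ^ (-(1 : ℝ) / 2)

/-- The rescaling of `u` around `x`: `y ↦ (p / u(x)) (u(x + μ(x) y) - u(x))`. -/
def rescale (p : ℝ) (u : Plane → ℝ) (x : Plane) : Plane → ℝ :=
  fun y => (p / u x) * (u (x + muP p u x • y) - u x)

/-- Convergence in `C²_loc(S)`: uniform convergence of the functions together with their
first and second derivatives on every compact subset of `S`. -/
def TendstoC2LocOn {ι : Type*} (l : Filter ι) (v : ι → Plane → ℝ) (V : Plane → ℝ)
    (S : Set Plane) : Prop :=
  ∀ K : Set Plane, K ⊆ S → IsCompact K →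
    TendstoUniformlyOn v V l K ∧
    TendstoUniformlyOn (fun i x => fderiv ℝ (v i) x) (fderiv ℝ V) l K ∧
    TendstoUniformlyOn (fun i x => fderiv ℝ (fderiv ℝ (v i)) x) (fderiv ℝ (fderiv ℝ V)) l K

/-- A concentration system: `k` families of points in `Ω`, indexed along the filter `l`
(via exponents `p`), at which `p|u_p|^{p-1}` blows up and for which the properties
`(P₁ᵏ)`, `(P₂ᵏ)` and `(P₃ᵏ)` hold. -/
structure ConcSystem (Ω : Set Plane) (u : ℝ → Plane → ℝ) {ι : Type*} (l : Filter ι)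
    (p : ι → ℝ) (k : ℕ) (x : Fin k → ι → Plane) : Prop where
  mem : ∀ i n, x i n ∈ Ω
  blow : ∀ i, Tendsto (fun n => p n * |u (p n) (x i n)| ^ (p n - 1)) l atTop
  P1 : ∀ i j, i ≠ j →
    Tendsto (fun n => dist (x i n) (x j n) / muP (p n) (u (p n)) (x i n)) l atTop
  P2 : ∀ i, TendstoC2LocOn l (fun n => rescale (p n) (u (p n)) (x i n)) Ufn univ
  P3 : ∃ C > 0, ∀ n, ∀ y ∈ Ω,
    p n * (⨅ i, dist y (x i n)) ^ 2 * |u (p n) y| ^ (p n - 1) ≤ C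

/-- For sign-changing solutions satisfying the energy bound, the
concentration points stay away from the nodal line at scale `μ_{i,p}`:
`dist(x_{i,p}, NL_p)/μ_{i,p} → ∞`; consequently the rescaling of
`u_p^i = u_p·χ_{N_{i,p}}` (the restriction of `u_p` to the nodal domain of `x_{i,p}`)
around `x_{i,p}` converges to the standard bubble `U` in `C²_loc(ℝ²)`. -/
theorem statement7 (Ω : Set Plane) (hΩo : IsOpen Ω) (hΩconn : IsConnected Ω)
    (hΩbd : Bornology.IsBounded Ω)
    (u : ℝ → Plane → ℝ) (hu : ∀ p > 1, IsLaneEmden Ω p (u p))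
    (hsc : ∀ p > 1, (∃ x ∈ Ω, 0 < u p x) ∧ (∃ x ∈ Ω, u p x < 0))
    (C : ℝ) (hC : 0 < C)
    (hen : ∀ p > 1, p * ∫ x in Ω, ‖gradient (u p) x‖ ^ 2 ≤ C)
    (k : ℕ) (hk : 1 ≤ k) (pn : ℕ → ℝ) (hpn1 : ∀ m, 1 < pn m)
    (hpn : Tendsto pn atTop atTop)
    (x : Fin k → ℕ → Plane) (hCS : ConcSystem Ω u atTop pn k x) :
    (∀ i, Tendsto
      (fun m => Metric.infDist (x i m) (closure {y ∈ Ω | u (pn m) y = 0}) /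
        muP (pn m) (u (pn m)) (x i m)) atTop atTop) ∧
    (∀ i, TendstoC2LocOn atTop
      (fun m z => (pn m / u (pn m) (x i m)) *
        ((Set.indicator (connectedComponentIn {y ∈ Ω | u (pn m) y ≠ 0} (x i m))
            (u (pn m)))
          (x i m + muP (pn m) (u (pn m)) (x i m) • z) - u (pn m) (x i m)))
      Ufn univ) := by
  -- continuity of the bubble
  have hUcont : Continuous Ufn := by
    have hpos : ∀ w : Plane, (0:ℝ) < 1 + ‖w‖ ^ 2 / 8 := fun w => by positivity
    have h1 : Continuous fun w : Plane => (1 / (1 + ‖w‖ ^ 2 / 8)) ^ 2 := by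
      apply Continuous.pow
      exact continuous_const.div (by continuity) fun w => (hpos w).ne'
    rw [continuous_iff_continuousAt]
    intro w
    exact (Real.continuousAt_log (by positivity)).comp h1.continuousAt
  -- the key quantitative lemma: the concentration points move away, at scale μ,
  -- from any family of zero sets of u_{p_n}
  have key : ∀ (i : Fin k) (S : ℕ → Set Plane), (∀ m, (S m).Nonempty) →
      (∀ m, ∀ y ∈ S m, u (pn m) y = 0) →
      Tendsto (fun m => Metric.infDist (x i m) (S m) / muP (pn m) (u (pn m)) (x i m))
        atTop atTop := by
    intro i S hne hzero
    by_contra hnot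
    rw [Filter.tendsto_atTop] at hnot
    obtain ⟨b, hb⟩ := not_forall.1 hnot
    rw [Filter.not_eventually] at hb
    have hb' : ∃ᶠ m in atTop,
        Metric.infDist (x i m) (S m) / muP (pn m) (u (pn m)) (x i m) < b :=
      hb.mono fun m hm => not_le.1 hm
    set R : ℝ := |b| + 1 with hR
    obtain ⟨B, hB⟩ := (isCompact_closedBall (0:Plane) R).exists_bound_of_continuousOn
      hUcont.continuousOn
    have hP2 := (hCS.P2 i (closedBall 0 R) (subset_univ _) (isCompact_closedBall _ _)).1
    have hev1 := (Metric.tendstoUniformlyOn_iff.1 hP2) 1 one_pos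
    have hev2 : ∀ᶠ m in atTop, (1:ℝ) ≤ pn m * |u (pn m) (x i m)| ^ (pn m - 1) :=
      (hCS.blow i).eventually_ge_atTop 1
    have hev3 : ∀ᶠ m in atTop, B + 2 ≤ pn m := hpn.eventually_ge_atTop _
    obtain ⟨m, hm, h1, h2, h3⟩ := (hb'.and_eventually (hev1.and (hev2.and hev3))).exists
    set c := u (pn m) (x i m) with hc
    set μ := muP (pn m) (u (pn m)) (x i m) with hμ
    have hA : (0:ℝ) < pn m * |c| ^ (pn m - 1) := lt_of_lt_of_le one_pos h2
    have hμpos : 0 < μ := by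
      rw [hμ, muP]
      exact Real.rpow_pos_of_pos hA _
    have hcne : c ≠ 0 := by
      intro h0
      rw [h0, abs_zero, Real.zero_rpow (by have := hpn1 m; intro h; linarith [sub_eq_zero.1 h]),
        mul_zero] at h2
      linarith
    have hinf : Metric.infDist (x i m) (S m) < R * μ := by
      have h4 : Metric.infDist (x i m) (S m) < b * μ := (div_lt_iff₀ hμpos).1 hm
      have h5 : b * μ ≤ R * μ := by
        have := le_abs_self b
        nlinarith
      linarith
    obtain ⟨y, hyS, hdy⟩ := (Metric.infDist_lt_iff (hne m)).1 hinf
    set z : Plane := μ⁻¹ • (y - x i m) with hz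
    have hxz : x i m + μ • z = y := by
      rw [hz, smul_smul, mul_inv_cancel₀ hμpos.ne', one_smul]
      abel
    have hzK : z ∈ closedBall (0:Plane) R := by
      have h4 : ‖y - x i m‖ < R * μ := by
        rw [norm_sub_rev, ← dist_eq_norm]
        exact hdy
      rw [mem_closedBall, dist_zero_right, hz, norm_smul, norm_inv, Real.norm_eq_abs,
        abs_of_pos hμpos]
      rw [inv_mul_le_iff₀ hμpos, mul_comm]
      exact h4.le
    have hres : rescale (pn m) (u (pn m)) (x i m) z = -(pn m) := by
      have h4 : u (pn m) (x i m + muP (pn m) (u (pn m)) (x i m) • z) = 0 := by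
        rw [← hμ, hxz]
        exact hzero m y hyS
      show (pn m / u (pn m) (x i m)) *
          (u (pn m) (x i m + muP (pn m) (u (pn m)) (x i m) • z) - u (pn m) (x i m)) = -(pn m)
      rw [h4, ← hc]
      field_simp
      ring
    have hd := h1 z hzK
    rw [hres, Real.dist_eq] at hd
    have hUb := hB z hzK
    rw [Real.norm_eq_abs] at hUb
    have e1 := (abs_le.1 hUb).1
    have e2 := (abs_lt.1 hd).2
    linarith
  -- nonemptiness of the nodal set (intermediate value theorem)
  have hScont : ∀ m, ContinuousOn (u (pn m)) Ω := fun m =>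
    ((hu (pn m) (hpn1 m)).smooth.continuousOn).mono subset_closure
  have hSne : ∀ m, ({y ∈ Ω | u (pn m) y = 0} : Set Plane).Nonempty := by
    intro m
    obtain ⟨⟨a, haΩ, hap⟩, ⟨b, hbΩ, hbn⟩⟩ := hsc (pn m) (hpn1 m)
    have himg : IsPreconnected (u (pn m) '' Ω) :=
      hΩconn.isPreconnected.image _ (hScont m)
    have h0 : (0:ℝ) ∈ u (pn m) '' Ω :=
      himg.ordConnected.out (mem_image_of_mem _ hbΩ) (mem_image_of_mem _ haΩ)
        ⟨hbn.le, hap.le⟩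
    obtain ⟨y, hyΩ, hy0⟩ := h0
    exact ⟨y, hyΩ, hy0⟩
  have keyZ : ∀ i, Tendsto (fun m =>
      Metric.infDist (x i m) {y ∈ Ω | u (pn m) y = 0} / muP (pn m) (u (pn m)) (x i m))
      atTop atTop :=
    fun i => key i (fun m => {y ∈ Ω | u (pn m) y = 0}) hSne fun m y hy => hy.2
  have first : ∀ i, Tendsto
      (fun m => Metric.infDist (x i m) (closure {y ∈ Ω | u (pn m) y = 0}) /
        muP (pn m) (u (pn m)) (x i m)) atTop atTop := by
    intro i
    simpa only [Metric.infDist_closure] using keyZ i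
  -- Ω is not the whole plane and has nonempty frontier
  have hΩneq : Ω ≠ univ := by
    intro h
    obtain ⟨r, hr⟩ := hΩbd.subset_closedBall 0
    have hw : (EuclideanSpace.single (0 : Fin 2) (|r| + 1) : Plane) ∈ Ω := by
      rw [h]; exact mem_univ _
    have := hr hw
    rw [mem_closedBall, dist_zero_right, EuclideanSpace.norm_single, Real.norm_eq_abs] at this
    have h1 := le_abs_self r
    have habs : |(|r| + 1)| = |r| + 1 := abs_of_pos (by positivity)
    rw [habs] at this
    linarith
  have hfront : (frontier Ω).Nonempty := nonempty_frontier_iff.2 ⟨hΩconn.nonempty, hΩneq⟩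
  have keyF : ∀ i, Tendsto (fun m =>
      Metric.infDist (x i m) (frontier Ω) / muP (pn m) (u (pn m)) (x i m)) atTop atTop :=
    fun i => key i (fun _ => frontier Ω) (fun _ => hfront)
      fun m y hy => (hu (pn m) (hpn1 m)).bdry y hy
  refine ⟨first, fun i => ?_⟩
  intro K hKu hKc
  obtain ⟨R₀, hR₀⟩ := hKc.isBounded.subset_closedBall 0
  set R : ℝ := |R₀| + 1 with hRdef
  have hKR : K ⊆ closedBall 0 R :=
    hR₀.trans (closedBall_subset_closedBall (by
      have := le_abs_self R₀; linarith))
  have hKball : K ⊆ ball (0:Plane) (R + 2) := fun z hz => by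
    have := hKR hz
    rw [mem_closedBall, dist_zero_right] at this
    rw [mem_ball, dist_zero_right]
    linarith
  -- eventual equality of the indicator rescaling with the plain rescaling on ball 0 (R+2)
  have hEq : ∀ᶠ m in atTop, Set.EqOn
      (rescale (pn m) (u (pn m)) (x i m))
      (fun z => (pn m / u (pn m) (x i m)) *
        ((Set.indicator (connectedComponentIn {y ∈ Ω | u (pn m) y ≠ 0} (x i m))
            (u (pn m)))
          (x i m + muP (pn m) (u (pn m)) (x i m) • z) - u (pn m) (x i m)))
      (ball (0:Plane) (R + 2)) := by
    have hev2 : ∀ᶠ m in atTop, (1:ℝ) ≤ pn m * |u (pn m) (x i m)| ^ (pn m - 1) :=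
      (hCS.blow i).eventually_ge_atTop 1
    have hevF := (keyF i).eventually_ge_atTop (R + 3)
    have hevZ := (keyZ i).eventually_ge_atTop (R + 3)
    filter_upwards [hev2, hevF, hevZ] with m h2 hF hZ
    set μ := muP (pn m) (u (pn m)) (x i m) with hμ
    have hμpos : 0 < μ := by
      rw [hμ, muP]
      exact Real.rpow_pos_of_pos (lt_of_lt_of_le one_pos h2) _
    have hRpos : (0:ℝ) < R + 2 := by positivity
    have hF' : (R + 3) * μ ≤ Metric.infDist (x i m) (frontier Ω) := by
      have h4 : (R + 3) * μ ≤ (Metric.infDist (x i m) (frontier Ω) / μ) * μ :=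
        mul_le_mul_of_nonneg_right hF hμpos.le
      rwa [div_mul_cancel₀ _ hμpos.ne'] at h4
    have hZ' : (R + 3) * μ ≤ Metric.infDist (x i m) {y ∈ Ω | u (pn m) y = 0} := by
      have h4 : (R + 3) * μ ≤
          (Metric.infDist (x i m) {y ∈ Ω | u (pn m) y = 0} / μ) * μ :=
        mul_le_mul_of_nonneg_right hZ hμpos.le
      rwa [div_mul_cancel₀ _ hμpos.ne'] at h4
    have hball : ball (x i m) ((R + 2) * μ) ⊆ {y ∈ Ω | u (pn m) y ≠ 0} := by
      intro w hw
      have hdw : dist (x i m) w < (R + 2) * μ := by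
        rw [dist_comm]; exact mem_ball.1 hw
      have hwΩ : w ∈ Ω := by
        by_contra hwn
        have h5 : Metric.infDist (x i m) Ωᶜ ≤ dist (x i m) w :=
          Metric.infDist_le_dist_of_mem hwn
        obtain ⟨yf, hyf, hyfd⟩ :=
          exists_mem_frontier_infDist_compl_eq_dist (hCS.mem i m) hΩneq
        have h6 : Metric.infDist (x i m) (frontier Ω) ≤ dist (x i m) yf :=
          Metric.infDist_le_dist_of_mem hyf
        nlinarith
      refine ⟨hwΩ, fun h0 => ?_⟩
      have h5 : Metric.infDist (x i m) {y ∈ Ω | u (pn m) y = 0} ≤ dist (x i m) w :=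
        Metric.infDist_le_dist_of_mem ⟨hwΩ, h0⟩
      nlinarith
    have hsub : ball (x i m) ((R + 2) * μ) ⊆
        connectedComponentIn {y ∈ Ω | u (pn m) y ≠ 0} (x i m) :=
      (convex_ball _ _).isPreconnected.subset_connectedComponentIn
        (mem_ball_self (by positivity)) hball
    intro z hz
    rw [mem_ball, dist_zero_right] at hz
    have hmem : x i m + μ • z ∈ ball (x i m) ((R + 2) * μ) := by
      rw [mem_ball, dist_eq_norm, add_sub_cancel_left, norm_smul,
        Real.norm_eq_abs, abs_of_pos hμpos]
      calc μ * ‖z‖ < μ * (R + 2) := by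
            exact mul_lt_mul_of_pos_left hz hμpos
        _ = (R + 2) * μ := mul_comm _ _
    show rescale (pn m) (u (pn m)) (x i m) z = _
    simp only
    rw [Set.indicator_of_mem (hsub hmem)]
    rfl
  have hEqK : ∀ᶠ m in atTop, Set.EqOn
      (rescale (pn m) (u (pn m)) (x i m))
      (fun z => (pn m / u (pn m) (x i m)) *
        ((Set.indicator (connectedComponentIn {y ∈ Ω | u (pn m) y ≠ 0} (x i m))
            (u (pn m)))
          (x i m + muP (pn m) (u (pn m)) (x i m) • z) - u (pn m) (x i m))) K :=
    hEq.mono fun m h => h.mono hKball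
  obtain ⟨h0, hd1, hd2⟩ := hCS.P2 i K hKu hKc
  refine ⟨h0.congr hEqK, ?_, ?_⟩
  · refine hd1.congr ?_
    filter_upwards [hEq] with m hm z hzK
    exact (Filter.eventuallyEq_of_mem (isOpen_ball.mem_nhds (hKball hzK)) hm).fderiv_eq
  · refine hd2.congr ?_
    filter_upwards [hEq] with m hm
    have hm1 : Set.EqOn
        (fderiv ℝ (rescale (pn m) (u (pn m)) (x i m)))
        (fderiv ℝ (fun z => (pn m / u (pn m) (x i m)) *
          ((Set.indicator (connectedComponentIn {y ∈ Ω | u (pn m) y ≠ 0} (x i m))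
              (u (pn m)))
            (x i m + muP (pn m) (u (pn m)) (x i m) • z) - u (pn m) (x i m))))
        (ball (0:Plane) (R + 2)) := fun w hw =>
      (Filter.eventuallyEq_of_mem (isOpen_ball.mem_nhds hw) hm).fderiv_eq
    intro z hzK
    exact (Filter.eventuallyEq_of_mem (isOpen_ball.mem_nhds (hKball hzK)) hm1).fderiv_eq
end
end

section
/- Let (u_p)_{p>1} be a family of solutions of the Lane–Emden problem satisfying the energy bound, and let k and (x_{i,p}) be as produced by the concentration theorem (so (P₁ᵏ), (P₂ᵏ), (P₃ᵏ) hold). Let (x_p) ⊂ Ω be any family of points such that p|u_p(x_p)|^{p−1} → ∞, and set μ(x_p) := (p|u_p(x_p)|^{p−1})^{−1/2}. Suppose (up to a subsequence) R_{k,p}(x_p) = |x_{i,p} − x_p| for a fixed index i ∈ {1,…,k}. Then limsup_{p→∞} μ_{i,p}/μ(x_p) ≤ 1. -/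
open Filter Metric MeasureTheory Set
open scoped Topology

noncomputable section

lemma rpow_half_mul_self {X : ℝ} (hX : 0 < X) : X ^ ((1:ℝ)/2) * X ^ ((1:ℝ)/2) = X := by
  rw [← Real.rpow_add hX]; norm_num

lemma rpow_neg_half_mul_self {X : ℝ} (hX : 0 < X) :
    X ^ (-(1:ℝ)/2) * X ^ (-(1:ℝ)/2) = X⁻¹ := by
  rw [← Real.rpow_add hX]; norm_num [Real.rpow_neg_one]

lemma muP_pos {p : ℝ} {u : Plane → ℝ} {a : Plane} (h : 0 < p * |u a| ^ (p-1)) :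
    0 < muP p u a := Real.rpow_pos_of_pos h _

lemma muP_inv {p : ℝ} {u : Plane → ℝ} {a : Plane} (h : 0 < p * |u a| ^ (p-1)) :
    (muP p u a)⁻¹ = (p * |u a| ^ (p-1)) ^ ((1:ℝ)/2) := by
  unfold muP
  rw [show (-(1:ℝ)/2) = -(1/2) by norm_num, Real.rpow_neg h.le, inv_inv]

lemma Ufn_eq (z : Plane) : Ufn z = -(2 * Real.log (1 + ‖z‖^2/8)) := by
  unfold Ufn
  rw [one_div, inv_pow, Real.log_inv, Real.log_pow]
  push_cast; ring

lemma Ufn_nonpos (z : Plane) : Ufn z ≤ 0 := by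
  rw [Ufn_eq]
  have h1 : (0:ℝ) ≤ ‖z‖^2 := sq_nonneg _
  have := Real.log_nonneg (show (1:ℝ) ≤ 1 + ‖z‖^2/8 by linarith)
  linarith

lemma Ufn_lower {z : Plane} {R : ℝ} (hz : ‖z‖ ≤ R) :
    -(2 * Real.log (1 + R^2/8)) ≤ Ufn z := by
  rw [Ufn_eq]
  have h1 : ‖z‖^2 ≤ R^2 := by nlinarith [norm_nonneg z]
  have h2 : (0:ℝ) ≤ ‖z‖^2 := sq_nonneg _
  have := Real.log_le_log (show (0:ℝ) < 1 + ‖z‖^2/8 by linarith)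
    (show 1 + ‖z‖^2/8 ≤ 1 + R^2/8 by linarith)
  linarith

/-- The key single-index computation: if `b` lies in the rescaled region around `a`
of radius `R` and the rescaled function is `δ`-close to the standard bubble there,
then `(μ(a)/μ(b))² ≤ e^δ`. -/
lemma key_calc (p : ℝ) (u : Plane → ℝ) (a b z : Plane) (δ R : ℝ) (hδ : 0 < δ)
    (hA : 0 < p * |u a| ^ (p-1)) (hB : 0 < p * |u b| ^ (p-1))
    (hp : 1 + 2 * Real.log (1 + R^2/8) + δ < p)
    (hz : ‖z‖ ≤ R) (hb : b = a + muP p u a • z)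
    (hv : dist (Ufn z) (rescale p u a z) < δ) :
    (muP p u a / muP p u b) * (muP p u a / muP p u b) ≤ Real.exp δ := by
  have hR : (0:ℝ) ≤ R := le_trans (norm_nonneg z) hz
  have hM : 0 ≤ Real.log (1 + R^2/8) := Real.log_nonneg (by nlinarith)
  have hp1 : 1 < p := by linarith
  have hp0 : 0 < p := by linarith
  have hua : u a ≠ 0 := by
    intro h
    rw [h] at hA
    simp [Real.zero_rpow (show p - 1 ≠ 0 by intro h'; linarith)] at hA
  have hU1 : Ufn z ≤ 0 := Ufn_nonpos z
  have hU2 : -(2 * Real.log (1 + R^2/8)) ≤ Ufn z := Ufn_lower hz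
  set v := rescale p u a z with hvdef
  have hvU : |v - Ufn z| < δ := by rw [abs_sub_comm, ← Real.dist_eq]; exact hv
  have hv1 : v ≤ δ := by have := abs_lt.1 hvU; linarith
  have hv2 : -(2 * Real.log (1 + R^2/8) + δ) ≤ v := by have := abs_lt.1 hvU; linarith
  have hq : u b / u a = 1 + v / p := by
    rw [hvdef, rescale, ← hb]
    field_simp
    ring
  have h1v : 0 < 1 + v / p := by
    have h3 : (2 * Real.log (1 + R^2/8) + δ) / p < 1 := (div_lt_one hp0).2 (by linarith)
    have h4 : -((2 * Real.log (1 + R^2/8) + δ) / p) ≤ v / p := by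
      rw [← neg_div]
      exact (div_le_div_iff_of_pos_right hp0).2 hv2
    linarith
  have hmul : (muP p u a / muP p u b) * (muP p u a / muP p u b)
      = (p * |u b| ^ (p-1)) / (p * |u a| ^ (p-1)) := by
    unfold muP
    rw [div_mul_div_comm, rpow_neg_half_mul_self hA, rpow_neg_half_mul_self hB]
    field_simp
  have hBA : (p * |u b| ^ (p-1)) / (p * |u a| ^ (p-1)) = (1 + v/p) ^ (p - 1) := by
    rw [mul_div_mul_left _ _ hp0.ne', ← Real.div_rpow (abs_nonneg _) (abs_nonneg _),
      ← abs_div, hq, abs_of_pos h1v]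
  rw [hmul, hBA, Real.rpow_def_of_pos h1v]
  apply Real.exp_le_exp.2
  have hlog : Real.log (1 + v/p) ≤ v / p := by
    have := Real.log_le_sub_one_of_pos h1v; linarith
  have hstep : Real.log (1 + v/p) * (p - 1) ≤ (v/p) * (p-1) :=
    mul_le_mul_of_nonneg_right hlog (by linarith)
  have hfin : (v/p) * (p-1) ≤ δ := by
    rcases le_or_gt v 0 with h | h
    · have hvp : v / p ≤ 0 := div_nonpos_of_nonpos_of_nonneg h hp0.le
      nlinarith
    · have h5 : (v/p) * (p-1) ≤ (v/p) * p :=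
        mul_le_mul_of_nonneg_left (by linarith) (div_pos h hp0).le
      rw [div_mul_cancel₀ _ hp0.ne'] at h5
      linarith
  linarith

/-- In the setting of the concentration theorem, for any family of
points `(x_p) ⊂ Ω` with `p|u_p(x_p)|^(p-1) → ∞` whose nearest concentration family is
`(x_{i,p})`, one has `limsup μ_{i,p}/μ(x_p) ≤ 1`. -/
theorem statement8 (Ω : Set Plane) (hΩo : IsOpen Ω) (hΩconn : IsConnected Ω)
    (hΩbd : Bornology.IsBounded Ω)
    (u : ℝ → Plane → ℝ) (hu : ∀ p > 1, IsLaneEmden Ω p (u p))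
    (C : ℝ) (hC : 0 < C)
    (hen : ∀ p > 1, p * ∫ x in Ω, ‖gradient (u p) x‖ ^ 2 ≤ C)
    (k : ℕ) (hk : 1 ≤ k) (pn : ℕ → ℝ) (hpn1 : ∀ m, 1 < pn m)
    (hpn : Tendsto pn atTop atTop)
    (x : Fin k → ℕ → Plane) (hCS : ConcSystem Ω u atTop pn k x)
    (xq : ℕ → Plane) (hmem : ∀ m, xq m ∈ Ω)
    (hblow : Tendsto (fun m => pn m * |u (pn m) (xq m)| ^ (pn m - 1)) atTop atTop)
    (i : Fin k)
    (hnear : ∀ m, (⨅ j, dist (xq m) (x j m)) = dist (xq m) (x i m)) :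
    limsup (fun m => muP (pn m) (u (pn m)) (x i m) / muP (pn m) (u (pn m)) (xq m))
      atTop ≤ 1 := by
  set f : ℕ → ℝ := fun m => muP (pn m) (u (pn m)) (x i m) / muP (pn m) (u (pn m)) (xq m)
    with hfdef
  have hf0 : ∀ m, 0 ≤ f m := fun m =>
    div_nonneg
      (Real.rpow_nonneg (mul_nonneg (by linarith [hpn1 m]) (Real.rpow_nonneg (abs_nonneg _) _)) _)
      (Real.rpow_nonneg (mul_nonneg (by linarith [hpn1 m]) (Real.rpow_nonneg (abs_nonneg _) _)) _)
  have hA := (hCS.blow i).eventually_gt_atTop 0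
  have hB := hblow.eventually_gt_atTop 0
  have key : ∀ ε : ℝ, 0 < ε → ∀ᶠ m in atTop, f m ≤ 1 + ε := by
    intro ε hε
    by_contra hcon
    rw [Filter.not_eventually] at hcon
    have hcon' : ∃ᶠ m in atTop, 1 + ε < f m := hcon.mono fun m h => lt_of_not_ge h
    obtain ⟨φ, hφmono, hφ⟩ := Filter.extraction_of_frequently_atTop hcon'
    have hφtop : Tendsto φ atTop atTop := hφmono.tendsto_atTop
    set g : ℕ → ℝ := fun m =>
      dist (xq (φ m)) (x i (φ m)) / muP (pn (φ m)) (u (pn (φ m))) (x i (φ m)) with hgdef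
    by_cases hcase : ∀ R : ℝ, ∀ᶠ m in atTop, R ≤ g m
    · -- the point escapes the rescaled region: use (P₃ᵏ)
      obtain ⟨C', hC', hP3⟩ := hCS.P3
      have hev := (hφtop.eventually hA).and ((hφtop.eventually hB).and
        (hcase (Real.sqrt C' + 1)))
      obtain ⟨m, h1, h2, hg'⟩ := hev.exists
      have hsq : (0:ℝ) ≤ Real.sqrt C' := Real.sqrt_nonneg _
      have hgpos : 0 < g m := lt_of_lt_of_le (by linarith) hg'
      have hμa : 0 < muP (pn (φ m)) (u (pn (φ m))) (x i (φ m)) := muP_pos h1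
      set d := dist (xq (φ m)) (x i (φ m)) with hddef
      have hd : 0 < d := by
        have : d = g m * muP (pn (φ m)) (u (pn (φ m))) (x i (φ m)) := by
          rw [hgdef]; field_simp; exact hddef
        rw [this]; exact mul_pos hgpos hμa
      have hp3 := hP3 (φ m) (xq (φ m)) (hmem (φ m))
      rw [hnear (φ m)] at hp3
      have hd2B : d^2 * (pn (φ m) * |u (pn (φ m)) (xq (φ m))| ^ (pn (φ m) - 1)) ≤ C' := by
        nlinarith [hp3]
      have hμb : 0 < muP (pn (φ m)) (u (pn (φ m))) (xq (φ m)) := muP_pos h2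
      have hfgval : f (φ m) * g m
          = d * (pn (φ m) * |u (pn (φ m)) (xq (φ m))| ^ (pn (φ m) - 1)) ^ ((1:ℝ)/2) := by
        show (muP (pn (φ m)) (u (pn (φ m))) (x i (φ m)) / muP (pn (φ m)) (u (pn (φ m))) (xq (φ m)))
            * (dist (xq (φ m)) (x i (φ m)) / muP (pn (φ m)) (u (pn (φ m))) (x i (φ m))) = _
        rw [← muP_inv h2, ← hddef]
        field_simp
      have hfg : f (φ m) * g m ≤ Real.sqrt C' := by
        have h0 : 0 ≤ f (φ m) * g m := mul_nonneg (hf0 _) hgpos.le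
        have hsqeq : (f (φ m) * g m) * (f (φ m) * g m)
            = d^2 * (pn (φ m) * |u (pn (φ m)) (xq (φ m))| ^ (pn (φ m) - 1)) := by
          rw [hfgval, show ∀ a b : ℝ, (a*b)*(a*b) = (a*a)*(b*b) from fun a b => by ring,
            rpow_half_mul_self h2, ← pow_two]
        calc f (φ m) * g m = Real.sqrt ((f (φ m) * g m) * (f (φ m) * g m)) :=
              (Real.sqrt_mul_self h0).symm
          _ ≤ Real.sqrt C' := Real.sqrt_le_sqrt (by rw [hsqeq]; exact hd2B)
      have hle : f (φ m) ≤ Real.sqrt C' / g m := (le_div_iff₀ hgpos).2 hfg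
      have hlt1 : Real.sqrt C' / g m < 1 := by
        have : Real.sqrt C' / g m ≤ Real.sqrt C' / (Real.sqrt C' + 1) :=
          div_le_div_of_nonneg_left hsq (by linarith) hg'
        have h2' : Real.sqrt C' / (Real.sqrt C' + 1) < 1 :=
          (div_lt_one (by linarith)).2 (by linarith)
        linarith
      have := hφ m
      linarith
    · -- the point stays in the rescaled region: use (P₂ᵏ)
      push_neg at hcase
      obtain ⟨R, hR⟩ := hcase
      have hRfreq : ∃ᶠ m in atTop, g m ≤ max R 1 :=
        hR.mono fun m h => le_trans h.le (le_max_left _ _)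
      set R' := max R 1 with hR'def
      have hR' : (0:ℝ) < R' := lt_of_lt_of_le one_pos (le_max_right _ _)
      obtain ⟨ψ, hψmono, hψ⟩ := Filter.extraction_of_frequently_atTop hRfreq
      have hσmono : StrictMono (φ ∘ ψ) := hφmono.comp hψmono
      have hσtop : Tendsto (φ ∘ ψ) atTop atTop := hσmono.tendsto_atTop
      set δ := Real.log ((1+ε)^2) with hδdef
      have hδ : 0 < δ := Real.log_pos (by nlinarith)
      have hP2 := (hCS.P2 i (closedBall 0 R') (subset_univ _) (isCompact_closedBall _ _)).1
      rw [Metric.tendstoUniformlyOn_iff] at hP2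
      have hE := hP2 δ hδ
      have hev := (hσtop.eventually hA).and ((hσtop.eventually hB).and
        ((hσtop.eventually hE).and
          (hσtop.eventually (hpn.eventually_gt_atTop (1 + 2*Real.log (1+R'^2/8) + δ)))))
      obtain ⟨m, h1, h2, h3, h4⟩ := hev.exists
      set n := (φ ∘ ψ) m with hn
      have hμ : 0 < muP (pn n) (u (pn n)) (x i n) := muP_pos h1
      have hgm : dist (xq n) (x i n) / muP (pn n) (u (pn n)) (x i n) ≤ R' := hψ m
      set z := (muP (pn n) (u (pn n)) (x i n))⁻¹ • (xq n - x i n) with hzdef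
      have hznorm : ‖z‖ ≤ R' := by
        rw [hzdef, norm_smul, norm_inv, Real.norm_eq_abs, abs_of_pos hμ, ← dist_eq_norm,
          ← div_eq_inv_mul]
        exact hgm
      have hb : xq n = x i n + muP (pn n) (u (pn n)) (x i n) • z := by
        rw [hzdef, smul_inv_smul₀ hμ.ne']
        abel
      have hvv := h3 z (mem_closedBall_zero_iff.2 hznorm)
      have hcalc := key_calc (pn n) (u (pn n)) (x i n) (xq n) z δ R' hδ h1 h2 h4 hznorm hb hvv
      rw [Real.exp_log (by positivity)] at hcalc
      have hfn : 1 + ε < f n := hφ (ψ m)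
      nlinarith [hf0 n]
  have hcob : IsCoboundedUnder (· ≤ ·) atTop f :=
    Filter.isCoboundedUnder_le_of_le atTop hf0
  have hlim : ∀ ε : ℝ, 0 < ε → limsup f atTop ≤ 1 + ε := fun ε hε =>
    Filter.limsup_le_of_le hcob (key ε hε)
  by_contra hlt
  push_neg at hlt
  have := hlim ((limsup f atTop - 1)/2) (by linarith)
  linarith
end
end

section
/- In the setting of the previous proposition (family (x_p) ⊂ Ω with p|u_p(x_p)|^{p−1} → ∞, μ(x_p) := (p|u_p(x_p)|^{p−1})^{−1/2}, and R_{k,p}(x_p) = |x_{i,p} − x_p| for a fixed i), if in addition |x_p − x_{i,p}|/μ_{i,p} → ∞ as p → ∞, then μ_{i,p}/μ(x_p) → 0 as p → ∞. -/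
open Filter Metric MeasureTheory Set
open scoped Topology

noncomputable section

/-- In the setting of the previous proposition, if moreover
`|x_p − x_{i,p}|/μ_{i,p} → ∞`, then `μ_{i,p}/μ(x_p) → 0`. -/
theorem statement9 (Ω : Set Plane) (hΩo : IsOpen Ω) (hΩconn : IsConnected Ω)
    (hΩbd : Bornology.IsBounded Ω)
    (u : ℝ → Plane → ℝ) (hu : ∀ p > 1, IsLaneEmden Ω p (u p))
    (C : ℝ) (hC : 0 < C)
    (hen : ∀ p > 1, p * ∫ x in Ω, ‖gradient (u p) x‖ ^ 2 ≤ C)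
    (k : ℕ) (hk : 1 ≤ k) (pn : ℕ → ℝ) (hpn1 : ∀ m, 1 < pn m)
    (hpn : Tendsto pn atTop atTop)
    (x : Fin k → ℕ → Plane) (hCS : ConcSystem Ω u atTop pn k x)
    (xq : ℕ → Plane) (hmem : ∀ m, xq m ∈ Ω)
    (hblow : Tendsto (fun m => pn m * |u (pn m) (xq m)| ^ (pn m - 1)) atTop atTop)
    (i : Fin k)
    (hnear : ∀ m, (⨅ j, dist (xq m) (x j m)) = dist (xq m) (x i m))
    (hfar : Tendsto (fun m => dist (xq m) (x i m) / muP (pn m) (u (pn m)) (x i m))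
      atTop atTop) :
    Tendsto (fun m => muP (pn m) (u (pn m)) (x i m) / muP (pn m) (u (pn m)) (xq m))
      atTop (𝓝 0) := by
  obtain ⟨C', hC'pos, hP3⟩ := hCS.P3
  have h1 := (hCS.blow i).eventually_ge_atTop 1
  have h2 := hblow.eventually_ge_atTop 1
  have h3 := hfar.eventually_ge_atTop 1
  have hg : Tendsto (fun m => Real.sqrt C' *
      (dist (xq m) (x i m) / muP (pn m) (u (pn m)) (x i m))⁻¹) atTop (𝓝 0) := by
    have := (hfar.inv_tendsto_atTop).const_mul (Real.sqrt C')
    simpa using this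
  apply squeeze_zero' _ _ hg
  · filter_upwards [h1, h2] with m ha hb
    have hμi : 0 < muP (pn m) (u (pn m)) (x i m) :=
      Real.rpow_pos_of_pos (by linarith) _
    have hμq : 0 < muP (pn m) (u (pn m)) (xq m) :=
      Real.rpow_pos_of_pos (by linarith) _
    positivity
  · filter_upwards [h1, h2, h3] with m ha hb hd
    set a := pn m * |u (pn m) (x i m)| ^ (pn m - 1) with hadef
    set b := pn m * |u (pn m) (xq m)| ^ (pn m - 1) with hbdef
    set d := dist (xq m) (x i m) with hddef
    have ha0 : (0:ℝ) < a := by linarith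
    have hb0 : (0:ℝ) < b := by linarith
    have hμi : 0 < muP (pn m) (u (pn m)) (x i m) := Real.rpow_pos_of_pos ha0 _
    have hd0 : 0 < d := lt_of_lt_of_le hμi ((one_le_div hμi).mp hd)
    -- P3 bound at xq m
    have hkey : b * d ^ 2 ≤ C' := by
      have := hP3 m (xq m) (hmem m)
      rw [hnear m] at this
      calc b * d ^ 2 = pn m * d ^ 2 * |u (pn m) (xq m)| ^ (pn m - 1) := by ring
        _ ≤ C' := this
    have hble : b ≤ C' / d ^ 2 := by
      rw [le_div_iff₀ (by positivity)]
      exact hkey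
    have hsb : Real.sqrt b ≤ Real.sqrt C' / d := by
      have h1' : Real.sqrt b ≤ Real.sqrt (C' / d ^ 2) := Real.sqrt_le_sqrt hble
      have h2' : Real.sqrt (C' / d ^ 2) = Real.sqrt C' / d := by
        rw [Real.sqrt_div hC'pos.le, Real.sqrt_sq hd0.le]
      linarith [h1', h2'.le]
    -- rewrite μ_q in terms of sqrt b
    have hμq : muP (pn m) (u (pn m)) (xq m) = (Real.sqrt b)⁻¹ := by
      rw [muP, ← hbdef, neg_div, Real.rpow_neg hb0.le, Real.sqrt_eq_rpow]
    rw [hμq, div_eq_mul_inv, inv_inv]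
    calc muP (pn m) (u (pn m)) (x i m) * Real.sqrt b
        ≤ muP (pn m) (u (pn m)) (x i m) * (Real.sqrt C' / d) := by
          exact mul_le_mul_of_nonneg_left hsb hμi.le
      _ = Real.sqrt C' * (d / muP (pn m) (u (pn m)) (x i m))⁻¹ := by
          rw [inv_div]; ring
end
end

section
/- Under the G-symmetric assumptions, let (x_p) ⊂ Ω satisfy p|u_p(x_p)|^{p−1} → ∞ and set μ(x_p) := (p|u_p(x_p)|^{p−1})^{−1/2}. Assume the ratio x_p/μ(x_p) converges and that the rescaled functions v_p(x) := (p/u_p(x_p))(u_p(x_p + μ(x_p)x) − u_p(x_p)) converge to U in C²_loc(ℝ² ∖ {−lim_p x_p/μ(x_p)}), where U(x) := log(1/(1+|x|²/8)²). Then |x_p|/μ(x_p) → 0 as p → ∞; consequently v_p → U in C²_loc(ℝ² ∖ {0}). -/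
open Filter Metric MeasureTheory Set
open scoped Topology

noncomputable section

/-- The `G`-symmetric setting: `Ω` is a connected bounded (smooth) domain containing the
origin, invariant under a cyclic group `G` of rotations about the origin with
`|G| ≥ 4e`; `(u_p)` is a family of sign-changing `G`-symmetric solutions of the
Lane–Emden problem with two nodal domains, whose nodal line does not touch `∂Ω` and
does not pass through the origin, satisfying the energy bound `p∫|∇u_p|² ≤ a·8πe`
with `a < 5`; `‖u_p‖_∞ = ‖u_p⁺‖_∞`, and `x_p⁺`, `x_p⁻` are the maximum/minimum points. -/
structure GSymSetting (Ω : Set Plane) (G : Subgroup (Plane ≃ₗᵢ[ℝ] Plane))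
    (u : ℝ → Plane → ℝ) (xp xm : ℝ → Plane) (a : ℝ) : Prop where
  open' : IsOpen Ω
  conn : IsConnected Ω
  bdd : Bornology.IsBounded Ω
  origin : (0 : Plane) ∈ Ω
  cyc : IsCyclic ↥G
  finite' : Finite ↥G
  rot : ∀ g ∈ G,
    LinearMap.det ((LinearIsometryEquiv.toLinearEquiv g : Plane ≃ₗ[ℝ] Plane) :
      Plane →ₗ[ℝ] Plane) = 1
  card : 4 * Real.exp 1 ≤ (Nat.card ↥G : ℝ)
  inv : ∀ g ∈ G, ∀ x ∈ Ω, g x ∈ Ω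
  sol : ∀ p > 1, IsLaneEmden Ω p (u p)
  sym : ∀ p > 1, ∀ g ∈ G, ∀ x : Plane, u p (g x) = u p x
  signChanging : ∀ p > 1, (∃ x ∈ Ω, 0 < u p x) ∧ (∃ x ∈ Ω, u p x < 0)
  twoNodal : ∀ p > 1,
    {C : Set Plane | ∃ x ∈ {y ∈ Ω | u p y ≠ 0},
      C = connectedComponentIn {y ∈ Ω | u p y ≠ 0} x}.ncard = 2
  nlBdry : ∀ p > 1, closure {y ∈ Ω | u p y = 0} ∩ frontier Ω = ∅
  nlO : ∀ p > 1, (0 : Plane) ∉ closure {y ∈ Ω | u p y = 0}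
  aLt : a < 5
  energy : ∀ᶠ p in atTop, p * ∫ x in Ω, ‖gradient (u p) x‖ ^ 2 ≤
    a * (8 * Real.pi * Real.exp 1)
  xpMem : ∀ p > 1, xp p ∈ Ω
  xpMax : ∀ p > 1, ∀ y ∈ Ω, |u p y| ≤ u p (xp p)
  xmMem : ∀ p > 1, xm p ∈ Ω
  xmMin : ∀ p > 1, ∀ y ∈ Ω, u p (xm p) ≤ u p y

open Submodule in
private theorem fix_of_det_one (g : Plane ≃ₗᵢ[ℝ] Plane)
    (hdet : LinearMap.det
      ((LinearIsometryEquiv.toLinearEquiv g : Plane ≃ₗ[ℝ] Plane) : Plane →ₗ[ℝ] Plane) = 1)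
    {z : Plane} (hz : z ≠ 0) (hfix : g z = z) : g = 1 := by
  set f : Plane →ₗ[ℝ] Plane :=
    ((LinearIsometryEquiv.toLinearEquiv g : Plane ≃ₗ[ℝ] Plane) : Plane →ₗ[ℝ] Plane) with hf
  have hfapp : ∀ x, f x = g x := fun x => rfl
  have hdim : Module.finrank ℝ Plane = 2 := finrank_euclideanSpace_fin
  have hspan : Module.finrank ℝ (ℝ ∙ z) = 1 := finrank_span_singleton hz
  have hWs : Module.finrank ℝ (ℝ ∙ z) + Module.finrank ℝ ((ℝ ∙ z)ᗮ) = 2 := by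
    rw [Submodule.finrank_add_finrank_orthogonal]; exact hdim
  have hW : Module.finrank ℝ ((ℝ ∙ z)ᗮ) = 1 := by omega
  have hWbot : (ℝ ∙ z)ᗮ ≠ ⊥ := by
    intro h; rw [h] at hW; simp at hW
  obtain ⟨z', hz'W, hz'0⟩ := Submodule.exists_mem_ne_zero_of_ne_bot hWbot
  have hinner : (inner ℝ z z' : ℝ) = 0 :=
    (Submodule.mem_orthogonal_singleton_iff_inner_right).1 hz'W
  -- g z' ∈ (ℝ ∙ z)ᗮ
  have hgz' : g z' ∈ (ℝ ∙ z)ᗮ := by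
    rw [Submodule.mem_orthogonal_singleton_iff_inner_right]
    calc (inner ℝ z (g z') : ℝ) = inner ℝ (g z) (g z') := by rw [hfix]
    _ = inner ℝ z z' := g.inner_map_map z z'
    _ = 0 := hinner
  -- span z' = W
  have hsz' : Module.finrank ℝ (ℝ ∙ z') = 1 := finrank_span_singleton hz'0
  have hle : (ℝ ∙ z') ≤ (ℝ ∙ z)ᗮ := by
    rw [Submodule.span_singleton_le_iff_mem]; exact hz'W
  have hspanW : (ℝ ∙ z') = (ℝ ∙ z)ᗮ :=
    Submodule.eq_of_le_of_finrank_le hle (by rw [hW, hsz'])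
  obtain ⟨c, hc⟩ := Submodule.mem_span_singleton.1 (hspanW ▸ hgz')
  -- linear independence
  have li : LinearIndependent ℝ ![z, z'] := by
    rw [LinearIndependent.pair_iff]
    intro s t hst
    have h1 : (inner ℝ z (s • z + t • z') : ℝ) = 0 := by rw [hst]; simp
    have h2 : (inner ℝ z' (s • z + t • z') : ℝ) = 0 := by rw [hst]; simp
    rw [inner_add_right, real_inner_smul_right, real_inner_smul_right, hinner,
      real_inner_self_eq_norm_sq] at h1
    rw [inner_add_right, real_inner_smul_right, real_inner_smul_right,
      real_inner_self_eq_norm_sq] at h2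
    have hz2 : (0:ℝ) < ‖z‖ ^ 2 := pow_pos (norm_pos_iff.2 hz) 2
    have hz'2 : (0:ℝ) < ‖z'‖ ^ 2 := pow_pos (norm_pos_iff.2 hz'0) 2
    have hs : s = 0 := by
      rcases mul_eq_zero.1 (by linarith : s * ‖z‖ ^ 2 = 0) with h | h
      · exact h
      · linarith
    refine ⟨hs, ?_⟩
    rw [hs, zero_mul] at h2
    rcases mul_eq_zero.1 (by linarith : t * ‖z'‖ ^ 2 = 0) with h | h
    · exact h
    · linarith
  have hcard : Fintype.card (Fin 2) = Module.finrank ℝ Plane := by simp [hdim]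
  let b := basisOfLinearIndependentOfCardEqFinrank li hcard
  have hb : ⇑b = ![z, z'] := coe_basisOfLinearIndependentOfCardEqFinrank li hcard
  have e0 : f (b 0) = b 0 := by rw [hb]; simpa [hfapp] using hfix
  have e1 : f (b 1) = c • b 1 := by rw [hb]; simpa [hfapp] using hc.symm
  have hdetc : LinearMap.det f = c := by
    rw [← LinearMap.det_toMatrix b f, Matrix.det_fin_two]
    simp [LinearMap.toMatrix_apply, e0, e1, Finsupp.single_apply]
  have hc1 : c = 1 := by rw [← hdetc]; exact hdet.symm ▸ rfl
  have hfid : f = LinearMap.id := by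
    apply b.ext
    intro i
    fin_cases i
    · show f (b 0) = b 0
      exact e0
    · show f (b 1) = b 1
      rw [e1, hc1, one_smul]
  refine LinearIsometryEquiv.ext fun x => ?_
  have := congrFun (congrArg (fun (m : Plane →ₗ[ℝ] Plane) => (m : Plane → Plane)) hfid) x
  simpa [hfapp x] using this


set_option maxHeartbeats 1600000 in
/-- In the `G`-symmetric setting, if `(x_p) ⊂ Ω` satisfies
`p|u_p(x_p)|^(p-1) → ∞`, the ratio `x_p/μ(x_p)` converges to some `z∞`, and the
rescalings of `u_p` around `x_p` converge to `U` in `C²_loc(ℝ² ∖ {-z∞})`, then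
`|x_p|/μ(x_p) → 0`; consequently the rescalings converge to `U` in `C²_loc(ℝ² ∖ {0})`. -/
theorem statement18 (Ω : Set Plane) (G : Subgroup (Plane ≃ₗᵢ[ℝ] Plane))
    (u : ℝ → Plane → ℝ) (xp xm : ℝ → Plane) (a : ℝ)
    (hset : GSymSetting Ω G u xp xm a)
    (xq : ℝ → Plane) (hmem : ∀ p > 1, xq p ∈ Ω)
    (hblow : Tendsto (fun p => p * |u p (xq p)| ^ (p - 1)) atTop atTop)
    (zoo : Plane)
    (hratio : Tendsto (fun p => (muP p (u p) (xq p))⁻¹ • xq p) atTop (𝓝 zoo))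
    (hC2 : TendstoC2LocOn atTop (fun p => rescale p (u p) (xq p)) Ufn
      ({-zoo}ᶜ : Set Plane)) :
    Tendsto (fun p => ‖xq p‖ / muP p (u p) (xq p)) atTop (𝓝 0) ∧
    TendstoC2LocOn atTop (fun p => rescale p (u p) (xq p)) Ufn
      ({0}ᶜ : Set Plane) := by
  -- Step 1: zoo = 0
  have hzoo : zoo = 0 := by
    by_contra hne
    -- pick a nontrivial rotation g ∈ G
    have hcard2 : (1:ℝ) < Nat.card ↥G := by
      have := hset.card
      nlinarith [Real.exp_one_gt_d9]
    have hfin : Finite ↥G := hset.finite'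
    have hnt : Nontrivial ↥G := by
      rw [← Finite.one_lt_card_iff_nontrivial]
      exact_mod_cast hcard2
    obtain ⟨x, hx⟩ := exists_ne (1 : ↥G)
    set g : Plane ≃ₗᵢ[ℝ] Plane := (x : Plane ≃ₗᵢ[ℝ] Plane) with hgdef
    have hgG : g ∈ G := x.2
    have hg1 : g ≠ 1 := fun h => hx (Subtype.ext h)
    have hdet := hset.rot g hgG
    set winf : Plane := g zoo - zoo with hwdef
    have hwne : winf ≠ -zoo := by
      intro h
      rw [hwdef, sub_eq_iff_eq_add] at h
      simp only [neg_add_cancel] at h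
      exact hne (g.injective (by rw [h, map_zero]))
    set r : ℝ := dist winf (-zoo) / 2 with hrdef
    have hrpos : 0 < r := by
      have := dist_pos.2 hwne
      positivity
    set K : Set Plane := closedBall winf r with hKdef
    have hKS : K ⊆ ({-zoo}ᶜ : Set Plane) := by
      intro y hy
      simp only [mem_compl_iff, mem_singleton_iff]
      intro h
      rw [h] at hy
      have h1 : dist (-zoo) winf ≤ r := mem_closedBall.1 hy
      have h2 : dist winf (-zoo) = 2 * r := by rw [hrdef]; ring
      rw [dist_comm] at h1
      linarith
    obtain ⟨h1, -, -⟩ := hC2 K hKS (isCompact_closedBall _ _)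
    set s : ℝ → Plane := fun p => (muP p (u p) (xq p))⁻¹ • xq p with hsdef
    set w : ℝ → Plane := fun p => g (s p) - s p with hwpdef
    have hw : Tendsto w atTop (𝓝 winf) :=
      ((g.continuous.tendsto zoo).comp hratio).sub hratio
    have hmemK : ∀ᶠ p in atTop, w p ∈ K :=
      hw (closedBall_mem_nhds _ hrpos)
    have hpos : ∀ᶠ p in atTop, 0 < p * |u p (xq p)| ^ (p - 1) :=
      hblow.eventually_gt_atTop 0
    have hzero : ∀ᶠ p in atTop, rescale p (u p) (xq p) (w p) = 0 := by
      filter_upwards [eventually_gt_atTop (1:ℝ), hpos] with p hp ht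
      have hmu : 0 < muP p (u p) (xq p) := Real.rpow_pos_of_pos ht _
      have key : xq p + muP p (u p) (xq p) • w p = g (xq p) := by
        show xq p + muP p (u p) (xq p) •
          (g ((muP p (u p) (xq p))⁻¹ • xq p) - (muP p (u p) (xq p))⁻¹ • xq p) = g (xq p)
        rw [LinearIsometryEquiv.map_smul, smul_sub, smul_inv_smul₀ hmu.ne', smul_inv_smul₀ hmu.ne']
        abel
      show (p / u p (xq p)) * (u p (xq p + muP p (u p) (xq p) • w p) - u p (xq p)) = 0
      rw [key, hset.sym p hp g hgG (xq p), sub_self, mul_zero]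
    have hUcont : ContinuousWithinAt Ufn K winf := by
      apply ContinuousAt.continuousWithinAt
      have hbase : ContinuousAt (fun y : Plane => (1 / (1 + ‖y‖ ^ 2 / 8)) ^ 2) winf := by
        apply ContinuousAt.pow
        apply ContinuousAt.div continuousAt_const
        · fun_prop
        · positivity
      have hne' : (1 / (1 + ‖winf‖ ^ 2 / 8)) ^ 2 ≠ 0 := by positivity
      show ContinuousAt (Real.log ∘ fun y : Plane => (1 / (1 + ‖y‖ ^ 2 / 8)) ^ 2) winf
      exact ContinuousAt.comp (Real.continuousAt_log hne') hbase
    have hcomp : Tendsto (fun p => rescale p (u p) (xq p) (w p)) atTop (𝓝 (Ufn winf)) :=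
      h1.tendsto_comp hUcont (tendsto_nhdsWithin_iff.2 ⟨hw, hmemK⟩)
    have hU0 : Ufn winf = 0 := by
      have : Tendsto (fun _ : ℝ => (0:ℝ)) atTop (𝓝 (Ufn winf)) := hcomp.congr' hzero
      exact tendsto_nhds_unique this tendsto_const_nhds
    -- Ufn winf = 0 forces winf = 0
    have hw0 : winf = 0 := by
      unfold Ufn at hU0
      set t : ℝ := ‖winf‖ ^ 2 / 8 with htdef
      have ht0 : (0:ℝ) ≤ t := by rw [htdef]; positivity
      have hden : (0:ℝ) < 1 + t := by linarith
      have := Real.log_eq_zero.1 hU0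
      have hsq : (1 / (1 + t)) ^ 2 = 1 := by
        rcases this with h | h | h
        · exfalso
          have : (1 / (1 + t)) ≠ 0 := by positivity
          exact (pow_ne_zero 2 this) h
        · exact h
        · exfalso
          have : (0:ℝ) ≤ (1 / (1 + t)) ^ 2 := by positivity
          linarith
      have htz : t = 0 := by
        have h2 : (1 + t) ^ 2 = 1 := by
          field_simp at hsq
          nlinarith [hsq]
        nlinarith
      have : ‖winf‖ ^ 2 = 0 := by
        rw [htdef] at htz; linarith
      have : ‖winf‖ = 0 := by nlinarith [norm_nonneg winf]
      exact norm_eq_zero.1 this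
    have hfix : g zoo = zoo := by
      have h := hw0
      rw [hwdef, sub_eq_zero] at h
      exact h
    exact hg1 (fix_of_det_one g hdet hne hfix)
  constructor
  · have hratio0 : Tendsto (fun p => ‖(muP p (u p) (xq p))⁻¹ • xq p‖) atTop (𝓝 0) := by
      simpa [hzoo] using hratio.norm
    apply hratio0.congr'
    filter_upwards [hblow.eventually_gt_atTop 0] with p ht
    have hmu : 0 < muP p (u p) (xq p) := Real.rpow_pos_of_pos ht _
    rw [norm_smul, Real.norm_eq_abs, abs_of_pos (inv_pos.2 hmu), inv_mul_eq_div]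
  · have : ({0}ᶜ : Set Plane) = ({-zoo}ᶜ : Set Plane) := by rw [hzoo, neg_zero]
    rw [this]
    exact hC2
end
end
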